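/- For every positive integer n, r_n > (1/12)/(n + (1/30)/(n + (53/210)/(n + (195/371)/n))). -/

import Mathlib

open Real Filter Topology

/-- The depth-4 continued fraction, as a function of a real variable. -/
noncomputable def stirlingCF (x : ℝ) : ℝ :=
  (1/12) / (x + (1/30) / (x + (53/210) / (x + (195/371) / x)))

lemma stirlingCF_den_pos {x : ℝ} (hx : 0 < x) :
    0 < x + (1/30) / (x + (53/210) / (x + (195/371) / x)) := by
  have h1 : (0:ℝ) < x + (195/371) / x := by positivity
  have h2 : (0:ℝ) < x + (53/210) / (x + (195/371) / x) :=
    add_pos hx (div_pos (by norm_num) h1)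
  exact add_pos hx (div_pos (by norm_num) h2)

lemma stirlingCF_pos {x : ℝ} (hx : 0 < x) : 0 < stirlingCF x :=
  div_pos (by norm_num) (stirlingCF_den_pos hx)

lemma stirlingCF_le {x : ℝ} (hx : 0 < x) : stirlingCF x ≤ (1/12) / x := by
  apply div_le_div_of_nonneg_left (by norm_num) hx
  have h1 : (0:ℝ) < x + (195/371) / x := by positivity
  have h2 : (0:ℝ) < x + (53/210) / (x + (195/371) / x) :=
    add_pos hx (div_pos (by norm_num) h1)
  nlinarith [div_pos (by norm_num : (0:ℝ) < 1/30) h2]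

lemma stirlingCF_eq {x : ℝ} (hx : 0 < x) :
    stirlingCF x = (1/12) * (x^3 + (1237/1590) * x) / (x^4 + (43/53) * x^2 + 13/742) := by
  have h1 : (0:ℝ) < x + (195/371) / x := by positivity
  have h2 : (0:ℝ) < x + (53/210) / (x + (195/371) / x) :=
    add_pos hx (div_pos (by norm_num) h1)
  have h3 : (0:ℝ) < x + (1/30) / (x + (53/210) / (x + (195/371) / x)) :=
    add_pos hx (div_pos (by norm_num) h2)
  have h4 : (0:ℝ) < x^4 + (43/53) * x^2 + 13/742 := by positivity
  rw [stirlingCF]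
  field_simp
  ring

/-- The key rational inequality: the CF difference is dominated by the truncated
`artanh` series, for `x ≥ 1`. -/
lemma stirlingCF_step {x : ℝ} (hx : 1 ≤ x) :
    stirlingCF x - stirlingCF (x+1) ≤
      1/(3*(2*x+1)^2) + 1/(5*(2*x+1)^4) + 1/(7*(2*x+1)^6) + 1/(9*(2*x+1)^8) := by
  have hx0 : (0:ℝ) < x := by linarith
  have hx1 : (0:ℝ) < x + 1 := by linarith
  rw [stirlingCF_eq hx0, stirlingCF_eq hx1]
  have hA : (0:ℝ) < x^4 + (43/53) * x^2 + 13/742 := by positivity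
  have hB : (0:ℝ) < (x+1)^4 + (43/53) * (x+1)^2 + 13/742 := by positivity
  have hm : (0:ℝ) < 2*x+1 := by linarith
  rw [← sub_nonneg]
  have ht : (0:ℝ) ≤ x - 1 := by linarith
  have key : 1/(3*(2*x+1)^2) + 1/(5*(2*x+1)^4) + 1/(7*(2*x+1)^6) + 1/(9*(2*x+1)^8)
      - ((1/12) * (x^3 + (1237/1590) * x) / (x^4 + (43/53) * x^2 + 13/742)
        - (1/12) * ((x+1)^3 + (1237/1590) * (x+1)) / ((x+1)^4 + (43/53) * (x+1)^2 + 13/742))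
      = (1388601727/138742128 + (1517034667/38539480) * (x-1)
          + (3743599829/57809220) * (x-1)^2 + (117677843/2064615) * (x-1)^3
          + (1402800377/49550760) * (x-1)^4 + (390813/51940) * (x-1)^5
          + (130271/155820) * (x-1)^6)
        / ((2*x+1)^8 * ((x^4 + (43/53) * x^2 + 13/742) * ((x+1)^4 + (43/53) * (x+1)^2 + 13/742))) := by
    field_simp
    ring
  rw [key]
  have hnum : (0:ℝ) ≤ 1388601727/138742128 + (1517034667/38539480) * (x-1)
      + (3743599829/57809220) * (x-1)^2 + (117677843/2064615) * (x-1)^3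
      + (1402800377/49550760) * (x-1)^4 + (390813/51940) * (x-1)^5
      + (130271/155820) * (x-1)^6 := by
    nlinarith [pow_nonneg ht 2, pow_nonneg ht 3, pow_nonneg ht 4, pow_nonneg ht 5,
      pow_nonneg ht 6, ht]
  exact div_nonneg hnum (by positivity)

/-- Truncation of the `artanh` power series gives a strict lower bound. -/
lemma log_lb {x : ℝ} (hx0 : 0 < x) (hx1 : x < 1) :
    2 * (x + x^3/3 + x^5/5 + x^7/7 + x^9/9) < Real.log (1+x) - Real.log (1-x) := by
  set F : ℝ → ℝ := fun y => Real.log (1+y) - Real.log (1-y)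
      - 2 * (y + y^3/3 + y^5/5 + y^7/7 + y^9/9) with hF
  have hder : ∀ y : ℝ, -1 < y → y < 1 →
      HasDerivAt F (2 * y^10 / ((1+y) * (1-y))) y := by
    intro y h1 h2
    have hne1 : (1:ℝ) + y ≠ 0 := by linarith
    have hne2 : (1:ℝ) - y ≠ 0 := by linarith
    have d1 : HasDerivAt (fun y : ℝ => Real.log (1+y)) (1/(1+y)) y := by
      simpa using (((hasDerivAt_id y).const_add 1).log hne1)
    have d2 : HasDerivAt (fun y : ℝ => Real.log (1-y)) (-1/(1-y)) y := by
      simpa using (((hasDerivAt_id y).const_sub 1).log hne2)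
    have d3 : HasDerivAt (fun y : ℝ => 2 * (y + y^3/3 + y^5/5 + y^7/7 + y^9/9))
        (2 * (1 + y^2 + y^4 + y^6 + y^8)) y := by
      have h3 := hasDerivAt_pow 3 y
      have h5 := hasDerivAt_pow 5 y
      have h7 := hasDerivAt_pow 7 y
      have h9 := hasDerivAt_pow 9 y
      have := ((((hasDerivAt_id y).add (h3.div_const 3)).add (h5.div_const 5)).add
        (h7.div_const 7)).add (h9.div_const 9)
      have := this.const_mul 2
      refine HasDerivAt.congr_deriv this ?_
      push_cast
      ring
    have := (d1.sub d2).sub d3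
    refine HasDerivAt.congr_deriv this ?_
    field_simp
    ring
  have hmono : StrictMonoOn F (Set.Icc 0 x) := by
    apply strictMonoOn_of_deriv_pos (convex_Icc 0 x)
    · intro y hy
      exact (hder y (by linarith [hy.1]) (by linarith [hy.2])).continuousAt.continuousWithinAt
    · intro y hy
      rw [interior_Icc] at hy
      rw [(hder y (by linarith [hy.1]) (by linarith [hy.2])).deriv]
      have h1 : (0:ℝ) < 1 + y := by linarith [hy.1]
      have h2 : (0:ℝ) < 1 - y := by linarith [hy.2]
      exact div_pos (by nlinarith [pow_pos hy.1 10]) (mul_pos h1 h2)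
  have h0 : F 0 < F x := hmono (Set.left_mem_Icc.2 hx0.le)
    (Set.right_mem_Icc.2 hx0.le) hx0
  simp only [hF] at h0
  norm_num at h0
  linarith

/-- Error term in Stirling's formula: `n! = √(2π) n^(n+1/2) e^(-n) e^(r_n)`. -/
noncomputable def stirlingErr (n : ℕ) : ℝ :=
  Real.log (n.factorial) - ((n : ℝ) + 1/2) * Real.log n + n - Real.log (Real.sqrt (2 * Real.pi))

lemma stirlingErr_diff {n : ℕ} (hn : 0 < n) :
    stirlingErr n - stirlingErr (n+1)
      = ((n:ℝ) + 1/2) * (Real.log ((n:ℝ)+1) - Real.log n) - 1 := by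
  have hn0 : ((n:ℝ)) ≠ 0 := Nat.cast_ne_zero.2 hn.ne'
  have hf : ((n.factorial : ℝ)) ≠ 0 := Nat.cast_ne_zero.2 n.factorial_ne_zero
  have h1 : ((n:ℝ) + 1) ≠ 0 := by positivity
  unfold stirlingErr
  rw [Nat.factorial_succ]
  push_cast
  rw [Real.log_mul h1 hf]
  ring

lemma stirlingErr_eq {n : ℕ} (hn : 0 < n) :
    stirlingErr n = Real.log (Stirling.stirlingSeq n) - Real.log (Real.sqrt Real.pi) := by
  have hn0 : (0:ℝ) < n := Nat.cast_pos.2 hn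
  have hf : (0:ℝ) < (n.factorial : ℝ) := Nat.cast_pos.2 n.factorial_pos
  have hs : (0:ℝ) < Real.sqrt (2 * n) := Real.sqrt_pos.2 (by positivity)
  have hp : (0:ℝ) < ((n:ℝ) / Real.exp 1) ^ n := by positivity
  unfold stirlingErr Stirling.stirlingSeq
  rw [Real.log_div hf.ne' (by positivity), Real.log_mul hs.ne' hp.ne', Real.log_pow,
    Real.log_div hn0.ne' (Real.exp_ne_zero 1), Real.log_exp,
    Real.log_sqrt (by positivity), Real.log_sqrt (by positivity),
    Real.log_sqrt Real.pi_pos.le,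
    Real.log_mul (two_ne_zero) hn0.ne', Real.log_mul (two_ne_zero) Real.pi_ne_zero]
  ring

lemma stirlingErr_tendsto : Tendsto stirlingErr atTop (𝓝 0) := by
  have h1 : Tendsto (fun n => Real.log (Stirling.stirlingSeq n) - Real.log (Real.sqrt Real.pi))
      atTop (𝓝 0) := by
    have h2 : Tendsto (fun n => Real.log (Stirling.stirlingSeq n)) atTop
        (𝓝 (Real.log (Real.sqrt Real.pi))) :=
      ((Real.continuousAt_log (by positivity)).tendsto).comp Stirling.tendsto_stirlingSeq_sqrt_pi
    have := h2.sub (tendsto_const_nhds (x := Real.log (Real.sqrt Real.pi)) (f := atTop (α := ℕ)))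
    simpa using this
  apply h1.congr'
  filter_upwards [eventually_ge_atTop 1] with n hn
  exact (stirlingErr_eq hn).symm

lemma stirlingCF_tendsto : Tendsto (fun n : ℕ => stirlingCF n) atTop (𝓝 0) := by
  apply squeeze_zero' (g := fun n : ℕ => (1/12) / (n:ℝ))
  · filter_upwards [eventually_ge_atTop 1] with n hn
    exact (stirlingCF_pos (by exact_mod_cast hn : (0:ℝ) < n)).le
  · filter_upwards [eventually_ge_atTop 1] with n hn
    exact stirlingCF_le (by exact_mod_cast hn : (0:ℝ) < n)
  · exact tendsto_const_div_atTop_nhds_zero_nat (1/12)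

/-- The per-step strict inequality. -/
lemma step_ineq {n : ℕ} (hn : 1 ≤ n) :
    stirlingCF n - stirlingCF ((n:ℝ)+1) < stirlingErr n - stirlingErr (n+1) := by
  have hn1 : (1:ℝ) ≤ (n:ℝ) := by exact_mod_cast hn
  have hn0 : (0:ℝ) < n := by linarith
  set x : ℝ := 1 / (2*(n:ℝ)+1) with hxdef
  have hm : (0:ℝ) < 2*(n:ℝ)+1 := by linarith
  have hx0 : 0 < x := by positivity
  have hx1 : x < 1 := by
    rw [hxdef, div_lt_one hm]; linarith
  have e1 : (1:ℝ) + x = (2*(n:ℝ)+2) / (2*(n:ℝ)+1) := by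
    rw [hxdef]; field_simp; ring
  have e2 : (1:ℝ) - x = (2*(n:ℝ)) / (2*(n:ℝ)+1) := by
    rw [hxdef]; field_simp; ring
  have hlogeq : Real.log (1+x) - Real.log (1-x) = Real.log ((n:ℝ)+1) - Real.log n := by
    rw [e1, e2, Real.log_div (by linarith) hm.ne', Real.log_div (by linarith) hm.ne']
    have h2 : (2*(n:ℝ)+2) = 2 * ((n:ℝ)+1) := by ring
    rw [h2, Real.log_mul two_ne_zero (by linarith), Real.log_mul two_ne_zero hn0.ne']
    ring
  have hlb := log_lb hx0 hx1
  rw [hlogeq] at hlb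
  have hmul : ((n:ℝ) + 1/2) * (2 * (x + x^3/3 + x^5/5 + x^7/7 + x^9/9)) - 1
      = 1/(3*(2*(n:ℝ)+1)^2) + 1/(5*(2*(n:ℝ)+1)^4) + 1/(7*(2*(n:ℝ)+1)^6) + 1/(9*(2*(n:ℝ)+1)^8) := by
    rw [hxdef]
    field_simp
    ring
  have hstep := stirlingCF_step hn1
  have hpos : (0:ℝ) < (n:ℝ) + 1/2 := by linarith
  have := mul_lt_mul_of_pos_left hlb hpos
  rw [stirlingErr_diff (by omega)]
  calc stirlingCF (n:ℝ) - stirlingCF ((n:ℝ)+1)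
      ≤ 1/(3*(2*(n:ℝ)+1)^2) + 1/(5*(2*(n:ℝ)+1)^4) + 1/(7*(2*(n:ℝ)+1)^6) + 1/(9*(2*(n:ℝ)+1)^8) :=
        hstep
    _ = ((n:ℝ) + 1/2) * (2 * (x + x^3/3 + x^5/5 + x^7/7 + x^9/9)) - 1 := hmul.symm
    _ < ((n:ℝ) + 1/2) * (Real.log ((n:ℝ)+1) - Real.log n) - 1 := by linarith

/-- `r_n` exceeds the depth-4 continued fraction with numerators
`1/12`, `1/30`, `53/210`, `195/371`. -/
theorem stirlingErr_lower_bound_k5 (n : ℕ) (hn : 0 < n) :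
    stirlingErr n >
      (1/12) / ((n : ℝ) + (1/30) / ((n : ℝ) + (53/210) / ((n : ℝ) + (195/371) / n))) := by
  -- D m := stirlingErr m - stirlingCF m is (strictly) decreasing for m ≥ 1
  set D : ℕ → ℝ := fun m => stirlingErr m - stirlingCF m with hDdef
  have hstep : ∀ m : ℕ, 1 ≤ m → D (m+1) < D m := by
    intro m hm
    have h := step_ineq hm
    have hcast : ((m+1 : ℕ) : ℝ) = (m:ℝ) + 1 := by push_cast; ring
    simp only [hDdef, hcast]
    linarith
  have hanti : ∀ a b : ℕ, 1 ≤ a → a ≤ b → D b ≤ D a := by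
    intro a b ha hab
    induction b with
    | zero => omega
    | succ k ih =>
      rcases Nat.lt_or_ge a (k+1) with h | h
      · have hk : 1 ≤ k := by omega
        exact le_trans (hstep k hk).le (ih (by omega))
      · have : a = k + 1 := by omega
        rw [this]
  have htend : Tendsto D atTop (𝓝 0) := by
    have := stirlingErr_tendsto.sub stirlingCF_tendsto
    simpa using this
  have hD1 : 0 ≤ D (n+1) := by
    apply le_of_tendsto htend
    filter_upwards [eventually_ge_atTop (n+1)] with m hm
    exact hanti (n+1) m (by omega) hm
  have hfinal : 0 < D n := lt_of_le_of_lt hD1 (hstep n hn)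
  have : stirlingCF n < stirlingErr n := by
    simp only [hDdef] at hfinal
    linarith
  simpa [stirlingCF] using this
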